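/- arXiv:1505.02610 — 2 statements merged into one kernel-verified Lean document; each statement's English description precedes it below -/
import Mathlib

section
/- (Key Lemma) Let (M, m) be a maximally reductive pair, let A ⊆ H be a subset that crosses M with m ∈ A, and suppose there exists a ∈ A with σ(a) ∉ A and |a| − cut(A) > 0. Then A ∪ M or (H ∖ A) ∩ M is a side of a reductive ideal edge. -/
open Finset

/-- `cut d A = ∑_{x ∈ A} ∑_{y ∉ A} d x y`, the total weight of pairs
separated by the partition `{A, H ∖ A}`. -/
def cut {H : Type*} [Fintype H] [DecidableEq H] {Λ : Type*}
    [AddCommGroup Λ] [LinearOrder Λ] [IsOrderedAddMonoid Λ] (d : H → H → Λ) (A : Finset H) : Λ :=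
  ∑ x ∈ A, ∑ y ∈ Aᶜ, d x y

/-- `(X, x)` is a reductive pair if `x ∈ X`, `σ x ∉ X` and `|x| - cut X > 0`,
where `|x| = cut {x}`. -/
def IsReductivePair {H : Type*} [Fintype H] [DecidableEq H] {Λ : Type*}
    [AddCommGroup Λ] [LinearOrder Λ] [IsOrderedAddMonoid Λ] (d : H → H → Λ) (σ : H → H)
    (X : Finset H) (x : H) : Prop :=
  x ∈ X ∧ σ x ∉ X ∧ 0 < cut d {x} - cut d X

/-- `X` is a side of a reductive ideal edge if some `x` with `x` and `σ x` on
opposite sides of the partition `{X, H ∖ X}` satisfies `|x| - cut X > 0`. -/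
def IsSideOfReductiveIdealEdge {H : Type*} [Fintype H] [DecidableEq H] {Λ : Type*}
    [AddCommGroup Λ] [LinearOrder Λ] [IsOrderedAddMonoid Λ] (d : H → H → Λ) (σ : H → H)
    (X : Finset H) : Prop :=
  ∃ x : H, ((x ∈ X ∧ σ x ∉ X) ∨ (x ∉ X ∧ σ x ∈ X)) ∧ 0 < cut d {x} - cut d X

/-- `(M, m)` is maximally reductive: it is a reductive pair whose reduction
`|m| - cut M` is at least that of any reductive pair. -/
def IsMaximallyReductivePair {H : Type*} [Fintype H] [DecidableEq H] {Λ : Type*}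
    [AddCommGroup Λ] [LinearOrder Λ] [IsOrderedAddMonoid Λ] (d : H → H → Λ) (σ : H → H)
    (M : Finset H) (m : H) : Prop :=
  IsReductivePair d σ M m ∧
    ∀ X x, IsReductivePair d σ X x → cut d {x} - cut d X ≤ cut d {m} - cut d M

/-!
The cut function is submodular, `cut (A ∪ M) + cut (A ∩ M) ≤ cut A + cut M`, and posimodular,
`cut (A \ M) + cut (M \ A) ≤ cut A + cut M`. Maximality of `(M, m)` says that every set `X`
separating `m` from `σ m` has `cut M ≤ cut X`. Applied to `A ∩ M` (when `m ∈ A`) and to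
the complement of `A \ M` (when `σ m ∈ A`) this gives `cut (A ∪ M) ≤ cut A`, resp.
`cut (M \ A) ≤ cut A`, so that `a` itself witnesses the conclusion. In the remaining case
(`σ a ∈ M`, `σ m ∉ A`) either `m` witnesses that `A ∪ M` is a side, or `a` witnesses that `M \ A`
is one, or else the pair `(A ∩ M, a)` or `(A \ M, a)` would reduce more than `(M, m)`.
-/

section

variable {H : Type*} [Fintype H] [DecidableEq H] {Λ : Type*}
  [AddCommGroup Λ] [LinearOrder Λ] [IsOrderedAddMonoid Λ] {d : H → H → Λ}

theorem cut_eq_sum_ite (d : H → H → Λ) (A : Finset H) :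
    cut d A = ∑ x, ∑ y, if x ∈ A ∧ y ∉ A then d x y else 0 := by
  simp only [ite_and, ← mem_compl, sum_ite_irrel, sum_const_zero, sum_ite_mem, univ_inter, cut]

theorem cut_compl (hsymm : ∀ x y, d x y = d y x) (A : Finset H) : cut d Aᶜ = cut d A := by
  rw [cut, compl_compl, sum_comm]
  exact sum_congr rfl fun y _ ↦ sum_congr rfl fun x _ ↦ hsymm x y

theorem cut_union_add_cut_inter_le (hd : ∀ x y, 0 ≤ d x y) (A B : Finset H) :
    cut d (A ∪ B) + cut d (A ∩ B) ≤ cut d A + cut d B := by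
  simp only [cut_eq_sum_ite d, ← sum_add_distrib]
  refine sum_le_sum fun x _ ↦ sum_le_sum fun y _ ↦ ?_
  by_cases hxA : x ∈ A <;> by_cases hxB : x ∈ B <;> by_cases hyA : y ∈ A <;>
    by_cases hyB : y ∈ B <;> simp [hxA, hxB, hyA, hyB, hd x y]

theorem cut_sdiff_add_cut_sdiff_le (hsymm : ∀ x y, d x y = d y x) (hd : ∀ x y, 0 ≤ d x y)
    (A B : Finset H) : cut d (A \ B) + cut d (B \ A) ≤ cut d A + cut d B := by
  have key := cut_union_add_cut_inter_le hd A Bᶜ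
  have hBA : (A ∪ Bᶜ)ᶜ = B \ A := by ext; simp [and_comm]
  rwa [← cut_compl hsymm (A ∪ Bᶜ), hBA, ← sdiff_eq_inter_compl, cut_compl hsymm, add_comm] at key

namespace IsMaximallyReductivePair

variable {σ : H → H} {M : Finset H} {m : H}

theorem reduction_le (h : IsMaximallyReductivePair d σ M m) {X : Finset H} {x : H}
    (hx : x ∈ X) (hσx : σ x ∉ X) : cut d {x} - cut d X ≤ cut d {m} - cut d M := by
  by_cases hpos : 0 < cut d {x} - cut d X
  · exact h.2 X x ⟨hx, hσx, hpos⟩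
  · exact (not_lt.1 hpos).trans h.1.2.2.le

theorem cut_le (h : IsMaximallyReductivePair d σ M m) {X : Finset H} (hm : m ∈ X)
    (hσm : σ m ∉ X) : cut d M ≤ cut d X :=
  (sub_le_sub_iff_left _).1 (h.reduction_le hm hσm)

theorem cut_union_le (h : IsMaximallyReductivePair d σ M m) (hd : ∀ x y, 0 ≤ d x y)
    {A : Finset H} (hm : m ∈ A) : cut d (A ∪ M) ≤ cut d A := by
  have hsub := cut_union_add_cut_inter_le hd A M
  have hM := h.cut_le (X := A ∩ M) (mem_inter.2 ⟨hm, h.1.1⟩) fun h' ↦ h.1.2.1 (mem_inter.1 h').2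
  grind

theorem cut_sdiff_le (h : IsMaximallyReductivePair d σ M m) (hsymm : ∀ x y, d x y = d y x)
    (hd : ∀ x y, 0 ≤ d x y) {A : Finset H} (hσm : σ m ∈ A) : cut d (M \ A) ≤ cut d A := by
  have hposub := cut_sdiff_add_cut_sdiff_le hsymm hd A M
  have hM := h.cut_le (X := (A \ M)ᶜ) (by simp [h.1.1]) (by simp [hσm, h.1.2.1])
  rw [cut_compl hsymm] at hM
  grind

theorem cut_union_lt (h : IsMaximallyReductivePair d σ M m) (hd : ∀ x y, 0 ≤ d x y)
    {A : Finset H} {a : H} (ha : a ∈ A ∩ M) (hσa : σ a ∉ A) (hA : cut d A < cut d {a}) :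
    cut d (A ∪ M) < cut d {m} := by
  have hsub := cut_union_add_cut_inter_le hd A M
  have hred := h.reduction_le ha fun h' ↦ hσa (mem_inter.1 h').1
  grind

theorem cut_sdiff_lt (h : IsMaximallyReductivePair d σ M m) (hsymm : ∀ x y, d x y = d y x)
    (hd : ∀ x y, 0 ≤ d x y) {A : Finset H} {a : H} (ha : a ∈ A \ M) (hσa : σ a ∈ M)
    (hA : cut d A < cut d {a}) (hm : cut d {m} ≤ cut d A) : cut d (M \ A) < cut d {a} := by
  have hposub := cut_sdiff_add_cut_sdiff_le hsymm hd A M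
  have hred := h.reduction_le ha fun h' ↦ (mem_sdiff.1 h').2 hσa
  grind

end IsMaximallyReductivePair

end

theorem key_lemma_general {H : Type*} [Fintype H] [DecidableEq H] {Λ : Type*}
    [AddCommGroup Λ] [LinearOrder Λ] [IsOrderedAddMonoid Λ] (d : H → H → Λ)
    (hsymm : ∀ x y, d x y = d y x) (hnonneg : ∀ x y, 0 ≤ d x y)
    (σ : H → H)
    (M : Finset H) (m : H) (hMm : IsMaximallyReductivePair d σ M m)
    (A : Finset H) (hmA : m ∈ A)
    (a : H) (haA : a ∈ A) (hsa : σ a ∉ A) (ha : 0 < cut d {a} - cut d A) :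
    IsSideOfReductiveIdealEdge d σ (A ∪ M) ∨
      IsSideOfReductiveIdealEdge d σ (Aᶜ ∩ M) := by
  rw [inter_comm, ← sdiff_eq_inter_compl]
  rw [sub_pos] at ha
  have hAM := hMm.cut_union_le hnonneg hmA
  rcases em' (σ a ∈ M) with hσaM | hσaM
  · exact .inl ⟨a, .inl ⟨mem_union_left _ haA, by simp [hsa, hσaM]⟩, sub_pos.2 (hAM.trans_lt ha)⟩
  have ha_side : a ∉ M \ A ∧ σ a ∈ M \ A := ⟨by simp [haA], mem_sdiff.2 ⟨hσaM, hsa⟩⟩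
  by_cases hσmA : σ m ∈ A
  · exact .inr ⟨a, .inr ha_side, sub_pos.2 ((hMm.cut_sdiff_le hsymm hnonneg hσmA).trans_lt ha)⟩
  have hm_side : m ∈ A ∪ M ∧ σ m ∉ A ∪ M := ⟨mem_union_left _ hmA, by simp [hσmA, hMm.1.2.1]⟩
  by_cases hm : cut d (A ∪ M) < cut d {m}
  · exact .inl ⟨m, .inl hm_side, sub_pos.2 hm⟩
  by_cases haM : a ∈ M
  · exact absurd (hMm.cut_union_lt hnonneg (mem_inter.2 ⟨haA, haM⟩) hsa ha) hm
  · exact .inr ⟨a, .inr ha_side, sub_pos.2 (hMm.cut_sdiff_lt hsymm hnonneg (mem_sdiff.2 ⟨haA, haM⟩)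
      hσaM ha ((not_lt.1 hm).trans hAM))⟩

/-- **Key Lemma.** Let `(M, m)` be a maximally reductive pair, let `A` cross `M`
with `m ∈ A`, and suppose some `a ∈ A` has `σ a ∉ A` and `|a| - cut A > 0`.
Then `A ∪ M` or `(H ∖ A) ∩ M` is a side of a reductive ideal edge. -/
theorem key_lemma {H : Type*} [Fintype H] [DecidableEq H] {Λ : Type*}
    [AddCommGroup Λ] [LinearOrder Λ] [IsOrderedAddMonoid Λ] (d : H → H → Λ)
    (hsymm : ∀ x y, d x y = d y x) (hnonneg : ∀ x y, 0 ≤ d x y)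
    (σ : H → H) (hinv : ∀ x, σ (σ x) = x) (hfix : ∀ x, σ x ≠ x)
    (hσnorm : ∀ x, cut d {σ x} = cut d {x})
    (M : Finset H) (m : H) (hMm : IsMaximallyReductivePair d σ M m)
    (A : Finset H) (hmA : m ∈ A)
    (hcross : (A ∩ M).Nonempty ∧ (A \ M).Nonempty ∧ (M \ A).Nonempty ∧
      ((A ∪ M)ᶜ).Nonempty)
    (a : H) (haA : a ∈ A) (hsa : σ a ∉ A) (ha : 0 < cut d {a} - cut d A) :
    IsSideOfReductiveIdealEdge d σ (A ∪ M) ∨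
      IsSideOfReductiveIdealEdge d σ (Aᶜ ∩ M) :=
  key_lemma_general d hsymm hnonneg σ M m hMm A hmA a haA hsa ha
end

section
/- Let α be a type and let φ be an automorphism of the free group on α such that: (1) for every i ∈ α, φ(of i) is conjugate to of i; and (2) for all distinct i, j ∈ α, φ((of i) * (of j)) is conjugate to an element whose reduced word has length at most 2. Then φ is an inner automorphism: there exists v in the free group with φ(g) = v * g * v⁻¹ for all g. -/
/-!
Write `φ (of i) = cᵢ * of i * cᵢ⁻¹`. Then `φ (of i * of j)` is conjugate to
`of i * u * of j * u⁻¹` with `u = cᵢ⁻¹ * cⱼ`. Peeling powers of `of i` off the left of `u` and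
powers of `of j` off its right, either `u ∈ ⟨of i⟩ * ⟨of j⟩`, or `of i * u * of j * u⁻¹` is
spelt by a cyclically reduced word of length `2 ‖u‖ + 2 ≥ 4`. The latter is impossible: the
`n`-th power of a cyclically reduced word `L` has norm `n * |L|`, while the `n`-th power of a
conjugate `c * mk L * c⁻¹` has norm at most `n * ‖c * mk L * c⁻¹‖`, and the two differ by at
most `2 ‖c‖`; so no conjugate of `mk L` is shorter than `L`. Finally, exponent sums show that
all the `cᵢ` lie in one coset `v * ⟨of i⟩`, so `φ` is conjugation by `v`.
-/

namespace FreeGroup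

variable {α : Type*}

theorem IsReduced.invRev {L : List (α × Bool)} (hL : IsReduced L) : IsReduced (invRev L) := by
  rw [FreeGroup.invRev, IsReduced, List.isChain_reverse, List.isChain_map]
  exact hL.imp fun a b h hab => by simpa using (h hab.symm).symm

theorem head?_invRev (L : List (α × Bool)) :
    (invRev L).head? = L.getLast?.map fun x => (x.1, !x.2) := by
  rw [invRev, List.head?_reverse, List.getLast?_map]

theorem getLast?_invRev (L : List (α × Bool)) :
    (invRev L).getLast? = L.head?.map fun x => (x.1, !x.2) := by
  rw [invRev, List.getLast?_reverse, List.head?_map]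

theorem isCyclicallyReduced_cons_append_cons_invRev {i j : α} {L : List (α × Bool)}
    (hL : IsReduced L) (hhead : ∀ x ∈ L.head?, x.1 ≠ i)
    (hlast : ∀ y ∈ L.getLast?, y.1 ≠ j) :
    IsCyclicallyReduced ((i, true) :: L ++ (j, true) :: invRev L) := by
  refine ⟨?_, ?_⟩
  · rw [List.cons_append, IsReduced, List.isChain_cons, List.isChain_append, List.isChain_cons]
    refine ⟨?_, hL, ⟨?_, hL.invRev⟩, ?_⟩
    · cases L with
      | nil => simp
      | cons x L => simpa using fun h => absurd h.symm (hhead x rfl)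
    · simp only [head?_invRev, Option.mem_map]
      rintro _ ⟨y, hy, rfl⟩ h
      exact absurd h.symm (hlast y hy)
    · rintro y hy _ ⟨⟩ h
      exact absurd h (hlast y hy)
  · rintro a ha _ ⟨⟩
    cases L with
    | nil =>
      simp only [invRev, List.map_nil, List.reverse_nil, List.cons_append, List.nil_append,
        List.getLast?_cons_cons, List.getLast?_singleton, Option.mem_def, Option.some.injEq] at ha
      simp [← ha]
    | cons x L =>
      simp only [List.cons_append, List.getLast?_cons, List.getLast?_append, getLast?_invRev,
        List.head?_cons, Option.map_some, Option.getD_some, Option.some_or, Option.mem_def,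
        Option.some.injEq] at ha
      exact ha ▸ fun h => absurd h (hhead x rfl)

theorem mk_singleton_mem_zpowers (x : α × Bool) : mk [x] ∈ Subgroup.zpowers (of x.1) := by
  obtain ⟨a, _ | _⟩ := x
  · rw [show mk [(a, false)] = (of a)⁻¹ by simp [of, inv_mk, invRev]]
    exact inv_mem (Subgroup.mem_zpowers _)
  · exact Subgroup.mem_zpowers _

variable [DecidableEq α]

theorem norm_mk_of_isReduced {L : List (α × Bool)} (hL : IsReduced L) :
    norm (mk L) = L.length := by
  rw [norm, toWord_mk, hL.reduce_eq]

theorem norm_pow_le (g : FreeGroup α) (n : ℕ) : norm (g ^ n) ≤ n * norm g := by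
  induction n with
  | zero => simp
  | succ n ih => rw [pow_succ, add_one_mul]; exact (norm_mul_le _ _).trans (by omega)

theorem norm_conj_le (c g : FreeGroup α) : norm (c * g * c⁻¹) ≤ norm g + 2 * norm c := by
  have := norm_mul_le (c * g) c⁻¹
  have := norm_mul_le c g
  rw [norm_inv_eq] at *
  omega

theorem IsCyclicallyReduced.norm_mk_pow {L : List (α × Bool)} (hL : IsCyclicallyReduced L)
    (n : ℕ) : norm (mk L ^ n) = n * L.length := by
  rw [norm, pow_mk, toWord_mk, (hL.flatten_replicate n).isReduced.reduce_eq]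
  simp

theorem IsCyclicallyReduced.length_le_norm_of_isConj {L : List (α × Bool)}
    (hL : IsCyclicallyReduced L) {g : FreeGroup α} (hg : IsConj (mk L) g) :
    L.length ≤ norm g := by
  obtain ⟨c, rfl⟩ := isConj_iff.mp hg
  have key (n : ℕ) : n * L.length ≤ n * norm (c * mk L * c⁻¹) + 2 * norm c :=
    calc n * L.length = norm (mk L ^ n) := (hL.norm_mk_pow n).symm
      _ = norm (c⁻¹ * (c * mk L * c⁻¹) ^ n * c⁻¹⁻¹) := by rw [conj_pow]; group
      _ ≤ norm ((c * mk L * c⁻¹) ^ n) + 2 * norm c⁻¹ := norm_conj_le _ _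
      _ ≤ n * norm (c * mk L * c⁻¹) + 2 * norm c := by
        rw [norm_inv_eq]; gcongr; exact norm_pow_le _ _
  have := key (2 * norm c + 1)
  nlinarith

theorem two_mul_norm_add_two_le_norm_of_isConj {i j : α} {u g : FreeGroup α}
    (hhead : ∀ x ∈ u.toWord.head?, x.1 ≠ i) (hlast : ∀ y ∈ u.toWord.getLast?, y.1 ≠ j)
    (hu : IsConj g (of i * u * of j * u⁻¹)) : 2 * norm u + 2 ≤ norm g := by
  have hmk : mk ((i, true) :: u.toWord ++ (j, true) :: invRev u.toWord) =
      of i * u * of j * u⁻¹ := by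
    conv_rhs => rw [← mk_toWord (x := u), inv_mk]
    simp only [of, mul_mk, List.cons_append, List.nil_append, List.append_assoc]
  have := (isCyclicallyReduced_cons_append_cons_invRev isReduced_toWord hhead hlast
    ).length_le_norm_of_isConj (hmk ▸ hu.symm)
  simp only [List.cons_append, List.length_cons, List.length_append, invRev_length] at this
  rw [norm]
  omega

theorem exists_eq_zpow_mul_zpow_of_isConj {i j : α} {g : FreeGroup α} (hg : norm g < 4)
    (u : FreeGroup α) (hu : IsConj g (of i * u * of j * u⁻¹)) :
    ∃ a b : ℤ, u = of i ^ a * of j ^ b := by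
  rcases hw : u.toWord with _ | ⟨x, L⟩
  · exact ⟨0, 0, by simpa using toWord_eq_nil_iff.mp hw⟩
  have hred : IsReduced (x :: L) := hw ▸ isReduced_toWord
  by_cases hx : x.1 = i
  · obtain ⟨e, he⟩ := Subgroup.mem_zpowers_iff.mp (hx ▸ mk_singleton_mem_zpowers x)
    have hu' : u = of i ^ e * mk L := by
      rw [he, mul_mk, List.singleton_append, ← hw, mk_toWord]
    have : norm (mk L) < norm u := by
      rw [norm_mk_of_isReduced (hred.infix (List.suffix_cons x L).isInfix), norm, hw]
      simp
    obtain ⟨a, b, hab⟩ := exists_eq_zpow_mul_zpow_of_isConj (i := i) (j := j) hg (mk L)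
      (hu.trans (isConj_iff.mpr ⟨(of i ^ e)⁻¹, by rw [hu']; group⟩))
    exact ⟨e + a, b, by rw [hu', hab, zpow_add]; group⟩
  obtain ⟨M, y, hMy⟩ := (List.eq_nil_or_concat' (x :: L)).resolve_left (List.cons_ne_nil _ _)
  have hw' := hw.trans hMy
  rw [hMy] at hred
  by_cases hy : y.1 = j
  · obtain ⟨e, he⟩ := Subgroup.mem_zpowers_iff.mp (hy ▸ mk_singleton_mem_zpowers y)
    have hu' : u = mk M * of j ^ e := by rw [he, mul_mk, ← hw', mk_toWord]
    have : norm (mk M) < norm u := by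
      rw [norm_mk_of_isReduced (hred.infix (List.prefix_append M [y]).isInfix), norm, hw']
      simp
    obtain ⟨a, b, hab⟩ := exists_eq_zpow_mul_zpow_of_isConj (i := i) (j := j) hg (mk M)
      (by rwa [show of i * u * of j * u⁻¹ = of i * mk M * of j * (mk M)⁻¹ by
        rw [hu']; group] at hu)
    exact ⟨a, b + e, by rw [hu', hab, zpow_add]; group⟩
  have := two_mul_norm_add_two_le_norm_of_isConj (by simpa [hw] using hx)
    (by simpa [hw'] using hy) hu
  rw [norm, hw, List.length_cons] at this
  omega
termination_by norm u

theorem eq_zero_of_of_zpow_eq_zpow_mul_zpow {i j k : α} (hj : j ≠ i) (hk : k ≠ i)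
    {a b c : ℤ} (h : of i ^ a = of j ^ b * of k ^ c) : a = 0 := by
  simpa [hj, hk] using congrArg (fun g => Multiplicative.toAdd
    (FreeGroup.lift (Pi.mulSingle i (Multiplicative.ofAdd (1 : ℤ))) g)) h

theorem exists_forall_eq_mul_zpow {c : α → FreeGroup α}
    (hc : ∀ i j, i ≠ j → ∃ a b : ℤ, (c i)⁻¹ * c j = of i ^ a * of j ^ b) :
    ∃ v, ∀ i, ∃ k : ℤ, c i = v * of i ^ k := by
  rcases subsingleton_or_nontrivial α with hα | ⟨i₀, j₀, hij₀⟩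
  · rcases isEmpty_or_nonempty α with hα' | ⟨⟨i₀⟩⟩
    · exact ⟨1, isEmptyElim⟩
    · exact ⟨c i₀, fun i => ⟨0, by rw [Subsingleton.elim i i₀]; group⟩⟩
  choose! a b hab using hc
  have hc (i : α) (hi : i ≠ i₀) : c i = c i₀ * of i₀ ^ a i₀ i * of i ^ b i₀ i := by
    rw [mul_assoc, ← hab i₀ i hi.symm]; group
  have ha (i : α) (hi₀ : i ≠ i₀) : a i₀ i = a i₀ j₀ := by
    by_cases hj₀ : i = j₀
    · rw [hj₀]
    have := hab j₀ i (Ne.symm hj₀)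
    rw [hc i hi₀, hc j₀ hij₀.symm] at this
    refine sub_eq_zero.mp (eq_zero_of_of_zpow_eq_zpow_mul_zpow hij₀.symm hi₀
      (b := b i₀ j₀ + a j₀ i) (c := b j₀ i - b i₀ i) ?_)
    calc of i₀ ^ (a i₀ i - a i₀ j₀)
        = of j₀ ^ b i₀ j₀ * ((c i₀ * of i₀ ^ a i₀ j₀ * of j₀ ^ b i₀ j₀)⁻¹ *
            (c i₀ * of i₀ ^ a i₀ i * of i ^ b i₀ i)) * of i ^ (-b i₀ i) := by group
      _ = _ := by rw [this]; group
  refine ⟨c i₀ * of i₀ ^ a i₀ j₀, fun i => ?_⟩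
  by_cases hi₀ : i = i₀
  · exact ⟨-a i₀ j₀, by rw [hi₀]; group⟩
  · exact ⟨b i₀ i, by rw [hc i hi₀, ha i hi₀]⟩

end FreeGroup

/-- An automorphism of a free group which sends each basis element to a
conjugate of itself, and sends each product `(of i) * (of j)` of distinct basis
elements to a conjugate of an element of reduced word length at most `2`,
is an inner automorphism. -/
theorem freeGroup_aut_is_inner {α : Type*} [DecidableEq α]
    (φ : FreeGroup α ≃* FreeGroup α)
    (h1 : ∀ i : α, IsConj (FreeGroup.of i) (φ (FreeGroup.of i)))
    (h2 : ∀ i j : α, i ≠ j → ∃ g : FreeGroup α, FreeGroup.norm g ≤ 2 ∧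
      IsConj g (φ (FreeGroup.of i * FreeGroup.of j))) :
    ∃ v : FreeGroup α, ∀ g : FreeGroup α, φ g = v * g * v⁻¹ := by
  choose c hc using fun i => isConj_iff.mp (h1 i)
  obtain ⟨v, hv⟩ := FreeGroup.exists_forall_eq_mul_zpow (c := c) fun i j hij => by
    obtain ⟨g, hg, hconj⟩ := h2 i j hij
    refine FreeGroup.exists_eq_zpow_mul_zpow_of_isConj (by omega) _
      (hconj.trans (isConj_iff.mpr ⟨(c i)⁻¹, ?_⟩))
    rw [map_mul, ← hc i, ← hc j]
    group
  have hφ : (φ : FreeGroup α →* FreeGroup α) = (MulAut.conj v).toMonoidHom :=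
    FreeGroup.ext_hom _ _ fun i => by
      obtain ⟨k, hk⟩ := hv i
      simp only [MonoidHom.coe_coe, ← hc i, hk, mul_inv_rev, MulEquiv.toMonoidHom_eq_coe,
        MulAut.conj_apply]
      group
  exact ⟨v, fun g => DFunLike.congr_fun hφ g⟩
end
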